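/- arXiv:1807.01003 — 2 statements merged into one kernel-verified Lean document; each statement's English description precedes it below -/
import Mathlib

section
/- Let X be an Archimedean partially ordered vector space with generating cone, and let P be a linear projection with P and I - P positive. Then the range of P is a band, i.e. (P(X))^⊥⊥ = P(X), and moreover X = P(X) ⊕ (P(X))^⊥. -/
/-!
Write `Q = 1 - P`. Since `P` and `Q` are positive and `P + Q = 1`, an element `z` dominates
`±(u + v)` with `u ∈ range P`, `v ∈ ker P` exactly when `P z` dominates `±u` and `Q z`
dominates `±v`; the latter condition does not see the sign of `v`, so `u ⊥ v`. Conversely, if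
`x ⊥ P x`, take `z ≥ ±(x - P x)` (the cone is generating); then `Q z ≥ ±(x - P x)`, so by
disjointness `Q z ≥ ±(x + P x)`, and applying `P` gives `0 ≥ ±2 P x`. Hence
`(range P)^⊥ = ker P = range Q`, and by symmetry `(range Q)^⊥ = ker Q = range P`.
-/

/-- Two vectors are disjoint: the upper bounds of {x+y, -x-y} equal those of {x-y, y-x}. -/
def Disj {X : Type*} [AddCommGroup X] [PartialOrder X] (x y : X) : Prop :=
  upperBounds ({x + y, -x - y} : Set X) = upperBounds ({x - y, y - x} : Set X)


/-- The disjoint complement of a set. -/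
def DisjComp {X : Type*} [AddCommGroup X] [PartialOrder X] (S : Set X) : Set X :=
  {x | ∀ y ∈ S, Disj x y}

/-- The ordered scalar multiplication class as it stood in Mathlib (Dec 2024), since removed. -/
class OrderedSMul (R M : Type*) [Semiring R] [PartialOrder R] [AddCommMonoid M] [PartialOrder M]
    [SMulWithZero R M] : Prop where
  protected smul_lt_smul_of_pos : ∀ {a b : M}, ∀ {c : R}, a < b → 0 < c → c • a < c • b
  protected lt_of_smul_lt_smul_of_pos : ∀ {a b : M}, ∀ {c : R}, c • a < c • b → 0 < c → a < b

section Disjointness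

variable {X : Type*} [AddCommGroup X] [PartialOrder X]

theorem disj_iff {x y : X} :
    Disj x y ↔ ∀ z, (x + y ≤ z ∧ -(x + y) ≤ z ↔ x - y ≤ z ∧ -(x - y) ≤ z) := by
  simp only [Disj, Set.ext_iff, upperBounds_insert, upperBounds_singleton, Set.mem_inter_iff,
    Set.mem_Ici, neg_add', neg_sub]

theorem Disj.symm {x y : X} (h : Disj x y) : Disj y x := by
  rw [disj_iff] at h ⊢
  intro z
  rw [add_comm, ← neg_sub x y, neg_neg, and_comm (a := -(x - y) ≤ z)]
  exact h z

theorem exists_le_and_neg_le [IsOrderedAddMonoid X]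
    (hgen : ∀ x : X, ∃ a b : X, 0 ≤ a ∧ 0 ≤ b ∧ x = a - b) (x : X) :
    ∃ z, x ≤ z ∧ -x ≤ z := by
  obtain ⟨a, b, ha, hb, rfl⟩ := hgen x
  refine ⟨a + b, (sub_le_self a hb).trans (le_add_of_nonneg_right hb), ?_⟩
  rw [neg_sub]
  exact (sub_le_self b ha).trans (le_add_of_nonneg_left ha)

end Disjointness

section Projection

variable {X : Type*} [AddCommGroup X] [PartialOrder X] [IsOrderedAddMonoid X]

theorem le_and_neg_le_add_iff {R : Type*} [Ring R] [Module R X] {P : X →ₗ[R] X}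
    (hP : Monotone P) (hQ : Monotone ⇑(1 - P)) {u v z : X} (hu : P u = u) (hv : P v = 0) :
    u + v ≤ z ∧ -(u + v) ≤ z ↔ (u ≤ P z ∧ -u ≤ P z) ∧ (v ≤ (1 - P) z ∧ -v ≤ (1 - P) z) := by
  constructor
  · rintro ⟨h₁, h₂⟩
    exact ⟨⟨by simpa [hu, hv] using hP h₁, by simpa [hu, hv] using hP h₂⟩,
      by simpa [hu, hv] using hQ h₁, by simpa [hu, hv] using hQ h₂⟩
  · rintro ⟨⟨h₁, h₂⟩, h₃, h₄⟩
    have hz : P z + (1 - P) z = z := by simp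
    rw [← hz, neg_add]
    exact ⟨add_le_add h₁ h₃, add_le_add h₂ h₄⟩

theorem disj_of_map_eq_self_of_map_eq_zero {R : Type*} [Ring R] [Module R X] {P : X →ₗ[R] X}
    (hP : Monotone P) (hQ : Monotone ⇑(1 - P)) {u v : X} (hu : P u = u) (hv : P v = 0) :
    Disj u v := by
  rw [disj_iff]
  intro z
  rw [le_and_neg_le_add_iff hP hQ hu hv, sub_eq_add_neg u v,
    le_and_neg_le_add_iff hP hQ hu (by simp [hv]), neg_neg, and_comm (a := -v ≤ _)]

variable {R : Type*} [DivisionRing R] [CharZero R] [Module R X] {P : X →ₗ[R] X}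

theorem map_eq_zero_of_disj_map (hPP : IsIdempotentElem P) (hP : Monotone P)
    (hQ : Monotone ⇑(1 - P)) (hgen : ∀ x : X, ∃ a b : X, 0 ≤ a ∧ 0 ≤ b ∧ x = a - b)
    {x : X} (hx : Disj x (P x)) : P x = 0 := by
  have hPPx : P (P x) = P x := LinearMap.congr_fun hPP x
  obtain ⟨z, hz₁, hz₂⟩ := exists_le_and_neg_le hgen (x - P x)
  have hw : x - P x ≤ (1 - P) z ∧ -(x - P x) ≤ (1 - P) z :=
    ⟨by simpa [hPPx] using hQ hz₁, by simpa [hPPx] using hQ hz₂⟩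
  obtain ⟨hw₁, hw₂⟩ := (disj_iff.mp hx _).mpr hw
  have hPw : P ((1 - P) z) = 0 := by simp [show P (P z) = P z from LinearMap.congr_fun hPP z]
  have h₁ : P x + P x ≤ 0 := by simpa only [map_add, hPPx, hPw] using hP hw₁
  have h₂ : 0 ≤ P x + P x := by
    simpa only [map_neg, map_add, hPPx, hPw, neg_nonpos] using hP hw₂
  have htwo : (2 : R) • P x = 0 := by rw [two_smul]; exact le_antisymm h₁ h₂
  exact (smul_eq_zero.mp htwo).resolve_left two_ne_zero

theorem disjComp_range_eq_ker (hPP : IsIdempotentElem P) (hP : Monotone P)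
    (hQ : Monotone ⇑(1 - P)) (hgen : ∀ x : X, ∃ a b : X, 0 ≤ a ∧ 0 ≤ b ∧ x = a - b) :
    DisjComp (Set.range P) = LinearMap.ker P := by
  ext y
  refine ⟨fun hy => map_eq_zero_of_disj_map hPP hP hQ hgen (hy _ (Set.mem_range_self y)), ?_⟩
  rintro hy _ ⟨x, rfl⟩
  exact (disj_of_map_eq_self_of_map_eq_zero hP hQ (LinearMap.congr_fun hPP x) hy).symm

end Projection

theorem range_is_projection_band_general {X : Type*} [AddCommGroup X] [PartialOrder X]
    [IsOrderedAddMonoid X] [Module ℝ X]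
    (hgen : ∀ x : X, ∃ a b : X, 0 ≤ a ∧ 0 ≤ b ∧ x = a - b)
    (P : X →ₗ[ℝ] X) (hP : P ∘ₗ P = P)
    (hPpos : ∀ x : X, 0 ≤ x → 0 ≤ P x)
    (hQpos : ∀ x : X, 0 ≤ x → 0 ≤ x - P x) :
    DisjComp (DisjComp (Set.range P)) = Set.range P ∧
    (∀ x : X, ∃ a ∈ Set.range P, ∃ b ∈ DisjComp (Set.range P), x = a + b) ∧
    Set.range P ∩ DisjComp (Set.range P) = {0} := by
  have hidem : IsIdempotentElem P := hP
  have hPmono : Monotone P := (monotone_iff_map_nonneg P).2 hPpos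
  have hQmono : Monotone ⇑(1 - P) :=
    (monotone_iff_map_nonneg _).2 fun x hx => by simpa using hQpos x hx
  have hker := disjComp_range_eq_ker hidem hPmono hQmono hgen
  have hkerQ : DisjComp (Set.range ⇑(1 - P)) = LinearMap.ker (1 - P) :=
    disjComp_range_eq_ker hidem.one_sub hQmono (by rwa [sub_sub_cancel]) hgen
  refine ⟨?_, fun x => ⟨P x, Set.mem_range_self x, x - P x, ?_, (add_sub_cancel _ _).symm⟩, ?_⟩
  · rw [hker, LinearMap.IsIdempotentElem.ker_eq_range_one_sub hidem, LinearMap.coe_range, hkerQ,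
      ← LinearMap.IsIdempotentElem.range_eq_ker_one_sub hidem, LinearMap.coe_range]
  · simp [hker, show P (P x) = P x from LinearMap.congr_fun hP x]
  · rw [hker, ← LinearMap.coe_range, ← Submodule.coe_inf,
      (LinearMap.IsIdempotentElem.isCompl hidem).inf_eq_bot, Submodule.bot_coe]

theorem range_is_projection_band {X : Type*} [AddCommGroup X] [PartialOrder X]
    [IsOrderedAddMonoid X] [Module ℝ X]
    [OrderedSMul ℝ X]
    (harch : ∀ x y : X, (∀ n : ℕ, 0 < n → n • x ≤ y) → x ≤ 0)
    (hgen : ∀ x : X, ∃ a b : X, 0 ≤ a ∧ 0 ≤ b ∧ x = a - b)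
    (P : X →ₗ[ℝ] X) (hP : P ∘ₗ P = P)
    (hPpos : ∀ x : X, 0 ≤ x → 0 ≤ P x)
    (hQpos : ∀ x : X, 0 ≤ x → 0 ≤ x - P x) :
    DisjComp (DisjComp (Set.range P)) = Set.range P ∧
    (∀ x : X, ∃ a ∈ Set.range P, ∃ b ∈ DisjComp (Set.range P), x = a + b) ∧
    Set.range P ∩ DisjComp (Set.range P) = {0} :=
  range_is_projection_band_general hgen P hP hPpos hQpos
end

section
/- Let X be a partially ordered vector space and V a subspace with V ∩ V^⊥ = {0} and X = V ⊕ V^⊥. If P is the linear projection onto V along V^⊥, then both P and I - P are positive. -/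
/-! Write `x = v + w` with `v ∈ V` and `w ∈ V^⊥`, so that `P x = v` and `x - P x = w`.
If `0 ≤ v + w`, then `v + w` dominates `-(v + w)`, so it is an upper bound of
`{v + w, -v - w}` and, by disjointness, of `{v - w, w - v}`. This gives `0 ≤ 2v` and `0 ≤ 2w`,
and halving gives `v, w ≥ 0`. -/

lemma nonneg_of_add_self_nonneg {X : Type*} [AddCommGroup X] [PartialOrder X] [Module ℝ X]
    [PosSMulMono ℝ X] {x : X} (hx : 0 ≤ x + x) : 0 ≤ x := by
  have := smul_nonneg (by norm_num : (0 : ℝ) ≤ 2⁻¹) hx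
  rwa [← two_smul ℝ x, smul_smul, inv_mul_cancel₀ two_ne_zero, one_smul] at this

section

variable {X : Type*} [AddCommGroup X] [PartialOrder X] [IsOrderedAddMonoid X]

lemma Disj.add_self_nonneg_of_add_nonneg {x y : X} (h : Disj x y) (hxy : 0 ≤ x + y) :
    0 ≤ x + x ∧ 0 ≤ y + y := by
  have hub : x + y ∈ upperBounds ({x + y, -x - y} : Set X) := by
    rintro z (rfl | rfl)
    · exact le_rfl
    · rw [← neg_add']
      exact (neg_nonpos.mpr hxy).trans hxy
  rw [h] at hub
  have hxy_le : x - y ≤ x + y := hub (Set.mem_insert _ _)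
  have hyx_le : y - x ≤ x + y := hub (Set.mem_insert_of_mem _ rfl)
  constructor
  · simpa only [show x + y - (y - x) = x + x by abel] using sub_nonneg.mpr hyx_le
  · simpa only [show x + y - (x - y) = y + y by abel] using sub_nonneg.mpr hxy_le

lemma Disj.nonneg_of_add_nonneg [Module ℝ X] [PosSMulMono ℝ X] {x y : X} (h : Disj x y)
    (hxy : 0 ≤ x + y) : 0 ≤ x ∧ 0 ≤ y :=
  (h.add_self_nonneg_of_add_nonneg hxy).imp nonneg_of_add_self_nonneg nonneg_of_add_self_nonneg

end

theorem projection_onto_band_positive_general {X : Type*} [AddCommGroup X] [PartialOrder X] [IsOrderedAddMonoid X] [Module ℝ X]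
    [PosSMulStrictMono ℝ X]
    (V : Submodule ℝ X)
    (hsum : ∀ x : X, ∃ v ∈ V, ∃ w ∈ DisjComp (V : Set X), x = v + w)
    (P : X →ₗ[ℝ] X)
    (hPV : ∀ v ∈ V, P v = v)
    (hPperp : ∀ w ∈ DisjComp (V : Set X), P w = 0) :
    ∀ x : X, 0 ≤ x → 0 ≤ P x ∧ P x ≤ x := by
  intro x hx
  obtain ⟨v, hv, w, hw, rfl⟩ := hsum x
  obtain ⟨hw0, hv0⟩ := (hw v hv).nonneg_of_add_nonneg (by rwa [add_comm] at hx)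
  have hP : P (v + w) = v := by rw [map_add, hPV v hv, hPperp w hw, add_zero]
  rw [hP]
  exact ⟨hv0, le_add_of_nonneg_right hw0⟩

theorem projection_onto_band_positive {X : Type*} [AddCommGroup X] [PartialOrder X] [IsOrderedAddMonoid X] [Module ℝ X]
    [PosSMulStrictMono ℝ X] [PosSMulReflectLT ℝ X]
    (V : Submodule ℝ X)
    (hinter : (V : Set X) ∩ DisjComp (V : Set X) = {0})
    (hsum : ∀ x : X, ∃ v ∈ V, ∃ w ∈ DisjComp (V : Set X), x = v + w)
    (P : X →ₗ[ℝ] X)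
    (hPV : ∀ v ∈ V, P v = v)
    (hPperp : ∀ w ∈ DisjComp (V : Set X), P w = 0) :
    ∀ x : X, 0 ≤ x → 0 ≤ P x ∧ P x ≤ x :=
  projection_onto_band_positive_general V hsum P hPV hPperp
end
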